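/- The second moment of the quenched normalized moment generating function admits the representation E_P[(E^ω_{o,o}[e^{⟨θ,X_N⟩}])^2]/φ(θ)^{2N} = Ê^θ⊗Ê^θ[ exp( Σ_{i=0}^{N−1} 1{X_i = Y_i} V(X_{i+1}−X_i, Y_{i+1}−Y_i) ) ], where V(x,y) = log( E_P[π_{0,1}(0,x) π_{0,1}(0,y)] / (q(x) q(y)) ) and X, Y are independent walks with step law q^θ. -/

import Mathlib

/-!
Expanding the square gives a double sum over pairs of paths `(σ, τ)`, and the tilt
`e^{⟨θ, X_N⟩} / φ(θ)^N` splits into one factor `e^{⟨θ, σ_i⟩} / φ(θ)` per step. The expectation of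
the product of the two quenched path probabilities factorizes over time, since different times
involve disjoint sets of sites. The factor at time `i` is `q(σ_i) q(τ_i)` when `X_i ≠ Y_i`
(independence across sites) and `E[π(0,σ_i) π(0,τ_i)] = q(σ_i) q(τ_i) e^{V(σ_i, τ_i)}` when
`X_i = Y_i` (identical distribution); ellipticity keeps both sides of the last identity positive,
so the logarithm in `V` does not hit its junk values.
-/

open MeasureTheory ProbabilityTheory Filter

def unitVecs (d : ℕ) : Finset (Fin d → ℤ) :=
  Finset.image
    (fun p : Fin d × Bool => fun i => if i = p.1 then (if p.2 then 1 else -1) else 0)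
    Finset.univ

noncomputable def phiFn {d : ℕ} (q : (Fin d → ℤ) → ℝ) (θ : Fin d → ℝ) : ℝ :=
  ∑ z ∈ unitVecs d, q z * Real.exp (∑ i, θ i * (z i : ℝ))

/-- The normalized quenched expectation
`u^θ_{n+k}(ω, n, x) = E^ω_{n,x}[ e^{⟨θ, X_{n+k} - X_n⟩} ] e^{-k log φ(θ)}`,
written as an explicit sum over nearest-neighbor paths of length `k` started at
position `x` at time `n`, where `π m y y'` is the (quenched) probability of
jumping from `y` at time `m` to `y'` at time `m+1`, and `lphi` plays the role of
`log φ(θ)`. -/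
noncomputable def qExp {d : ℕ} (π : ℤ → (Fin d → ℤ) → (Fin d → ℤ) → ℝ)
    (θ : Fin d → ℝ) (lphi : ℝ) (k : ℕ) (n : ℤ) (x : Fin d → ℤ) : ℝ :=
  ∑ σ : Fin k → (unitVecs d),
    (∏ i : Fin k,
      π (n + (i : ℕ)) (x + ∑ j ∈ Finset.univ.filter (fun j => j < i), (σ j : Fin d → ℤ))
        (x + ∑ j ∈ Finset.univ.filter (fun j => j ≤ i), (σ j : Fin d → ℤ)))
    * Real.exp ((∑ l, θ l * (((∑ j, (σ j : Fin d → ℤ)) l : ℤ) : ℝ)) - k * lphi)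

namespace ProbabilityTheory

variable {Ω ι κ β : Type*} {mΩ : MeasurableSpace Ω} {μ : Measure Ω} [MeasurableSpace β]
  {f : ι → Ω → β}

theorem iIndepFun.integral_prod_blocks (hf : iIndepFun f μ) (hmeas : ∀ i, AEMeasurable (f i) μ)
    (S : κ → Finset ι) (g : ∀ k, (S k → β) → ℝ) (hg : ∀ k, Measurable (g k))
    (s : Finset κ) (hS : (s : Set κ).PairwiseDisjoint S) :
    ∫ ω, ∏ k ∈ s, g k (fun i => f i ω) ∂μ = ∏ k ∈ s, ∫ ω, g k (fun i => f i ω) ∂μ := by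
  classical
  induction s using Finset.induction_on with
  | empty => simp [hf.isProbabilityMeasure]
  | insert a s ha ih =>
    have hdisj : Disjoint (S a) (s.biUnion S) :=
      (Finset.disjoint_biUnion_right _ _ _).2 fun k hk =>
        hS (by simp) (by simp [hk]) (by rintro rfl; exact ha hk)
    let rest : (s.biUnion S → β) → ℝ := fun v =>
      ∏ k ∈ s.attach, g k (fun i => v ⟨i, Finset.mem_biUnion.2 ⟨k, k.2, i.2⟩⟩)
    have hrest : ∀ ω, ∏ k ∈ s, g k (fun i => f i ω) = rest (fun i => f i ω) := fun ω =>
      (Finset.prod_attach s (fun k => g k (fun i => f i ω))).symm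
    have hmeas_rest : Measurable rest :=
      Finset.measurable_prod _ fun k _ =>
        (hg k).comp (measurable_pi_lambda _ fun i => measurable_pi_apply _)
    have htuple : ∀ T : Finset ι, AEMeasurable (fun ω (i : T) => f i ω) μ :=
      fun T => aemeasurable_pi_lambda _ fun i => hmeas i
    have hindep : IndepFun (fun ω => g a (fun i => f i ω)) (fun ω => rest (fun i => f i ω)) μ :=
      (hf.indepFun_finset₀ (S a) (s.biUnion S) hdisj hmeas).comp₀ (htuple _) (htuple _)
        (hg a).aemeasurable hmeas_rest.aemeasurable
    simp only [Finset.prod_insert ha, hrest]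
    rw [hindep.integral_fun_mul_eq_mul_integral
      ((hg a).comp_aemeasurable (htuple _)).aestronglyMeasurable
      (hmeas_rest.comp_aemeasurable (htuple _)).aestronglyMeasurable]
    simp only [← hrest, ih (hS.subset (by simp))]

end ProbabilityTheory

theorem integral_sq_sum_mul {Ω ι : Type*} {mΩ : MeasurableSpace Ω} {μ : Measure Ω} [Fintype ι]
    (W : ι → Ω → ℝ) (E : ι → ℝ) (hW : ∀ σ τ, Integrable (fun ω => W σ ω * W τ ω) μ) :
    ∫ ω, (∑ σ, W σ ω * E σ) ^ 2 ∂μ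
      = ∑ σ, ∑ τ, (∫ ω, W σ ω * W τ ω ∂μ) * (E σ * E τ) := by
  have hint : ∀ σ τ, Integrable (fun ω => W σ ω * W τ ω * (E σ * E τ)) μ :=
    fun σ τ => (hW σ τ).mul_const _
  simp_rw [sq, Finset.sum_mul_sum, mul_mul_mul_comm]
  rw [integral_finsetSum _ fun σ _ => integrable_finsetSum _ fun τ _ => hint σ τ]
  refine Finset.sum_congr rfl fun σ _ => ?_
  rw [integral_finsetSum _ fun τ _ => hint σ τ]
  exact Finset.sum_congr rfl fun τ _ => integral_mul_const _ _

theorem le_integral_of_forall_le {Ω : Type*} {mΩ : MeasurableSpace Ω} {μ : Measure Ω}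
    [IsProbabilityMeasure μ] {f : Ω → ℝ} (hf : Integrable f μ) {c : ℝ} (h : ∀ ω, c ≤ f ω) :
    c ≤ ∫ ω, f ω ∂μ := by
  simpa using integral_mono (integrable_const c) hf h

theorem ite_eq_mul_exp_ite_log {P : Prop} [Decidable P] {I u : ℝ} (hI : 0 < I) (hu : 0 < u) :
    (if P then I else u) = u * Real.exp (if P then Real.log (I / u) else 0) := by
  split_ifs
  · rw [Real.exp_log (div_pos hI hu)]; field_simp
  · simp

section Paths

variable {d N : ℕ}

def pathPos (σ : Fin N → unitVecs d) (i : Fin N) : Fin d → ℤ :=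
  ∑ j ∈ Finset.univ.filter (fun j => j < i), (σ j : Fin d → ℤ)

theorem sum_filter_le_eq_pathPos_add (σ : Fin N → unitVecs d) (i : Fin N) :
    ∑ j ∈ Finset.univ.filter (fun j => j ≤ i), (σ j : Fin d → ℤ) = pathPos σ i + σ i := by
  have h : Finset.univ.filter (fun j => j ≤ i)
      = insert i (Finset.univ.filter (fun j => j < i)) := by
    ext j
    simp [le_iff_lt_or_eq, or_comm]
  rw [h, Finset.sum_insert (by simp), add_comm, pathPos]

noncomputable def pathWeight (p : ℤ → (Fin d → ℤ) → (Fin d → ℤ) → ℝ) (σ : Fin N → unitVecs d) :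
    ℝ :=
  ∏ i : Fin N, p ((i : ℕ) : ℤ) (pathPos σ i) (pathPos σ i + σ i)

theorem qExp_zero_zero (p : ℤ → (Fin d → ℤ) → (Fin d → ℤ) → ℝ) (θ : Fin d → ℝ) (lphi : ℝ) :
    qExp p θ lphi N 0 0 = ∑ σ : Fin N → unitVecs d,
      pathWeight p σ
        * Real.exp ((∑ l, θ l * (((∑ j, (σ j : Fin d → ℤ)) l : ℤ) : ℝ)) - N * lphi) := by
  simp only [qExp, pathWeight, zero_add, sum_filter_le_eq_pathPos_add, pathPos]

theorem phiFn_pos {q : (Fin d → ℤ) → ℝ} (hq : ∀ z ∈ unitVecs d, 0 < q z) (θ : Fin d → ℝ)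
    {z : Fin d → ℤ} (hz : z ∈ unitVecs d) : 0 < phiFn q θ :=
  Finset.sum_pos (fun w hw => mul_pos (hq w hw) (Real.exp_pos _)) ⟨z, hz⟩

theorem exp_inner_sum_sub_mul_log_phiFn {q : (Fin d → ℤ) → ℝ} (hq : ∀ z ∈ unitVecs d, 0 < q z)
    (θ : Fin d → ℝ) (σ : Fin N → unitVecs d) :
    Real.exp ((∑ l, θ l * (((∑ j, (σ j : Fin d → ℤ)) l : ℤ) : ℝ)) - N * Real.log (phiFn q θ))
      = ∏ i, Real.exp (∑ l, θ l * (((σ i : Fin d → ℤ) l : ℤ) : ℝ)) / phiFn q θ := by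
  have hsum : ∑ l, θ l * (((∑ j, (σ j : Fin d → ℤ)) l : ℤ) : ℝ)
      = ∑ i, ∑ l, θ l * (((σ i : Fin d → ℤ) l : ℤ) : ℝ) := by
    simp only [Finset.sum_apply, Int.cast_sum, Finset.mul_sum]
    exact Finset.sum_comm
  have hN : (N : ℝ) * Real.log (phiFn q θ) = ∑ _i : Fin N, Real.log (phiFn q θ) := by simp
  rw [hsum, hN, ← Finset.sum_sub_distrib, Real.exp_sum]
  refine Finset.prod_congr rfl fun i _ => ?_
  rw [Real.exp_sub, Real.exp_log (phiFn_pos hq θ (σ i).2)]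

end Paths

section Environment

variable {d : ℕ} {Ω : Type*} {mΩ : MeasurableSpace Ω} {μ : Measure Ω}
  {π : Ω → ℤ → (Fin d → ℤ) → (Fin d → ℤ) → ℝ}

theorem stepProb_le_one (hnn : ∀ ω m x, ∀ z ∈ unitVecs d, 0 ≤ π ω m x (x + z))
    (hsum1 : ∀ ω m x, ∑ z ∈ unitVecs d, π ω m x (x + z) = 1)
    (ω : Ω) (m : ℤ) (x : Fin d → ℤ) {z : Fin d → ℤ} (hz : z ∈ unitVecs d) :
    π ω m x (x + z) ≤ 1 :=
  hsum1 ω m x ▸ Finset.single_le_sum (hnn ω m x) hz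

theorem norm_stepProb_le_one (hnn : ∀ ω m x, ∀ z ∈ unitVecs d, 0 ≤ π ω m x (x + z))
    (hsum1 : ∀ ω m x, ∑ z ∈ unitVecs d, π ω m x (x + z) = 1)
    (ω : Ω) (m : ℤ) (x : Fin d → ℤ) {z : Fin d → ℤ} (hz : z ∈ unitVecs d) :
    ‖π ω m x (x + z)‖ ≤ 1 := by
  rw [Real.norm_of_nonneg (hnn ω m x z hz)]
  exact stepProb_le_one hnn hsum1 ω m x hz

theorem norm_pathWeight_le_one (hnn : ∀ ω m x, ∀ z ∈ unitVecs d, 0 ≤ π ω m x (x + z))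
    (hsum1 : ∀ ω m x, ∑ z ∈ unitVecs d, π ω m x (x + z) = 1)
    {N : ℕ} (σ : Fin N → unitVecs d) (ω : Ω) : ‖pathWeight (π ω) σ‖ ≤ 1 := by
  rw [pathWeight, norm_prod]
  exact Finset.prod_le_one (fun _ _ => norm_nonneg _) fun i _ =>
    norm_stepProb_le_one hnn hsum1 ω _ _ (σ i).2

variable (hident : ∀ (m : ℤ) (x : Fin d → ℤ),
  IdentDistrib (fun ω (z : Fin d → ℤ) => π ω m x (x + z))
    (fun ω (z : Fin d → ℤ) => π ω 0 0 z) μ μ)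
include hident

theorem aemeasurable_stepProb (m : ℤ) (x z : Fin d → ℤ) :
    AEMeasurable (fun ω => π ω m x (x + z)) μ :=
  (hident m x).aemeasurable_fst.eval z

theorem aestronglyMeasurable_pathWeight {N : ℕ} (σ : Fin N → unitVecs d) :
    AEStronglyMeasurable (fun ω => pathWeight (π ω) σ) μ := by
  unfold pathWeight
  exact (Finset.aemeasurable_fun_prod _ fun i _ =>
    aemeasurable_stepProb hident _ _ _).aestronglyMeasurable

theorem integrable_pathWeight_mul_pathWeight [IsFiniteMeasure μ]
    (hnn : ∀ ω m x, ∀ z ∈ unitVecs d, 0 ≤ π ω m x (x + z))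
    (hsum1 : ∀ ω m x, ∑ z ∈ unitVecs d, π ω m x (x + z) = 1)
    {N : ℕ} (σ τ : Fin N → unitVecs d) :
    Integrable (fun ω => pathWeight (π ω) σ * pathWeight (π ω) τ) μ :=
  .of_bound ((aestronglyMeasurable_pathWeight hident σ).mul
    (aestronglyMeasurable_pathWeight hident τ)) 1 (ae_of_all _ fun ω => by
      rw [norm_mul]
      exact mul_le_one₀ (norm_pathWeight_le_one hnn hsum1 σ ω) (norm_nonneg _)
        (norm_pathWeight_le_one hnn hsum1 τ ω))

theorem integral_stepProb_pos [IsProbabilityMeasure μ] {c : ℝ} (hc : 0 < c)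
    (hell : ∀ ω m x, ∀ z ∈ unitVecs d, c ≤ π ω m x (x + z))
    (hsum1 : ∀ ω m x, ∑ z ∈ unitVecs d, π ω m x (x + z) = 1)
    {z : Fin d → ℤ} (hz : z ∈ unitVecs d) : 0 < ∫ ω, π ω 0 0 z ∂μ := by
  have hnn : ∀ ω m x, ∀ z ∈ unitVecs d, 0 ≤ π ω m x (x + z) :=
    fun ω m x z hz => hc.le.trans (hell ω m x z hz)
  have hint : Integrable (fun ω => π ω 0 0 (0 + z)) μ :=
    .of_bound (aemeasurable_stepProb hident 0 0 z).aestronglyMeasurable 1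
      (ae_of_all _ fun ω => norm_stepProb_le_one hnn hsum1 ω 0 0 hz)
  simp only [zero_add] at hint
  exact hc.trans_le (le_integral_of_forall_le hint fun ω => by simpa using hell ω 0 0 z hz)

theorem integral_stepProb_mul_stepProb_pos [IsProbabilityMeasure μ] {c : ℝ} (hc : 0 < c)
    (hell : ∀ ω m x, ∀ z ∈ unitVecs d, c ≤ π ω m x (x + z))
    (hsum1 : ∀ ω m x, ∑ z ∈ unitVecs d, π ω m x (x + z) = 1)
    {z w : Fin d → ℤ} (hz : z ∈ unitVecs d) (hw : w ∈ unitVecs d) :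
    0 < ∫ ω, π ω 0 0 z * π ω 0 0 w ∂μ := by
  have hnn : ∀ ω m x, ∀ z ∈ unitVecs d, 0 ≤ π ω m x (x + z) :=
    fun ω m x z hz => hc.le.trans (hell ω m x z hz)
  have hint : Integrable (fun ω => π ω 0 0 (0 + z) * π ω 0 0 (0 + w)) μ :=
    .of_bound ((aemeasurable_stepProb hident 0 0 z).mul
      (aemeasurable_stepProb hident 0 0 w)).aestronglyMeasurable 1 (ae_of_all _ fun ω => by
        rw [norm_mul]
        exact mul_le_one₀ (norm_stepProb_le_one hnn hsum1 ω 0 0 hz) (norm_nonneg _)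
          (norm_stepProb_le_one hnn hsum1 ω 0 0 hw))
  simp only [zero_add] at hint
  refine (mul_pos hc hc).trans_le (le_integral_of_forall_le hint fun ω => ?_)
  simpa using mul_le_mul (hell ω 0 0 z hz) (hell ω 0 0 w hw) hc.le (hnn ω 0 0 z hz)

theorem integral_stepProb (m : ℤ) (x z : Fin d → ℤ) :
    ∫ ω, π ω m x (x + z) ∂μ = ∫ ω, π ω 0 0 z ∂μ :=
  ((hident m x).comp (measurable_pi_apply z)).integral_eq

theorem integral_stepProb_mul_stepProb
    (hindep : iIndepFun (m := fun _ => inferInstance)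
      (fun (p : ℤ × (Fin d → ℤ)) (ω : Ω) (z : Fin d → ℤ) => π ω p.1 p.2 (p.2 + z)) μ)
    (m : ℤ) (x y z w : Fin d → ℤ) :
    ∫ ω, π ω m x (x + z) * π ω m y (y + w) ∂μ
      = if x = y then ∫ ω, π ω 0 0 z * π ω 0 0 w ∂μ
        else (∫ ω, π ω 0 0 z ∂μ) * ∫ ω, π ω 0 0 w ∂μ := by
  split_ifs with hxy
  · subst hxy
    exact ((hident m x).comp ((measurable_pi_apply z).mul (measurable_pi_apply w))).integral_eq
  · have hne : (m, x) ≠ (m, y) := by simp [hxy]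
    have hzw : IndepFun (fun ω => π ω m x (x + z)) (fun ω => π ω m y (y + w)) μ :=
      (hindep.indepFun hne).comp (measurable_pi_apply z) (measurable_pi_apply w)
    rw [hzw.integral_fun_mul_eq_mul_integral
        (aemeasurable_stepProb hident m x z).aestronglyMeasurable
        (aemeasurable_stepProb hident m y w).aestronglyMeasurable,
      integral_stepProb hident, integral_stepProb hident]

theorem integral_prod_stepProb_mul_stepProb
    (hindep : iIndepFun (m := fun _ => inferInstance)
      (fun (p : ℤ × (Fin d → ℤ)) (ω : Ω) (z : Fin d → ℤ) => π ω p.1 p.2 (p.2 + z)) μ)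
    {N : ℕ} (x y a b : Fin N → (Fin d → ℤ)) :
    ∫ ω, ∏ i : Fin N, π ω i (x i) (x i + a i) * π ω i (y i) (y i + b i) ∂μ
      = ∏ i : Fin N, if x i = y i then ∫ ω, π ω 0 0 (a i) * π ω 0 0 (b i) ∂μ
          else (∫ ω, π ω 0 0 (a i) ∂μ) * ∫ ω, π ω 0 0 (b i) ∂μ := by
  classical
  let S : Fin N → Finset (ℤ × (Fin d → ℤ)) := fun i =>
    {(((i : ℕ) : ℤ), x i), (((i : ℕ) : ℤ), y i)}
  have hS : ((Finset.univ : Finset (Fin N)) : Set (Fin N)).PairwiseDisjoint S := by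
    intro i _ j _ hij
    simp [S, Fin.val_inj, Ne.symm hij]
  have hprod := hindep.integral_prod_blocks
    (fun p => aemeasurable_pi_lambda _ fun z => aemeasurable_stepProb hident p.1 p.2 z) S
    (fun i v => v ⟨(((i : ℕ) : ℤ), x i), by simp [S]⟩ (a i)
      * v ⟨(((i : ℕ) : ℤ), y i), by simp [S]⟩ (b i))
    (fun i => by fun_prop) Finset.univ hS
  simp only at hprod
  rw [hprod]
  exact Finset.prod_congr rfl fun i _ => integral_stepProb_mul_stepProb hident hindep _ _ _ _ _

theorem integral_pathWeight_mul_pathWeight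
    (hindep : iIndepFun (m := fun _ => inferInstance)
      (fun (p : ℤ × (Fin d → ℤ)) (ω : Ω) (z : Fin d → ℤ) => π ω p.1 p.2 (p.2 + z)) μ)
    {N : ℕ} (σ τ : Fin N → unitVecs d) :
    ∫ ω, pathWeight (π ω) σ * pathWeight (π ω) τ ∂μ
      = ∏ i : Fin N, if pathPos σ i = pathPos τ i
          then ∫ ω, π ω 0 0 (σ i) * π ω 0 0 (τ i) ∂μ
          else (∫ ω, π ω 0 0 (σ i) ∂μ) * ∫ ω, π ω 0 0 (τ i) ∂μ := by
  simp only [pathWeight, ← Finset.prod_mul_distrib]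
  exact integral_prod_stepProb_mul_stepProb hident hindep _ _ _ _

end Environment

theorem stmt12_general {d : ℕ} (c : ℝ) (hc : 0 < c)
    {Ω : Type*} [MeasureSpace Ω] [IsProbabilityMeasure (ℙ : Measure Ω)]
    (π : Ω → ℤ → (Fin d → ℤ) → (Fin d → ℤ) → ℝ)
    (hell : ∀ ω m x, ∀ z ∈ unitVecs d, c ≤ π ω m x (x + z))
    (hsum1 : ∀ ω m x, ∑ z ∈ unitVecs d, π ω m x (x + z) = 1)
    (hindep : iIndepFun (m := fun _ => inferInstance)
      (fun (p : ℤ × (Fin d → ℤ)) (ω : Ω) (z : Fin d → ℤ) => π ω p.1 p.2 (p.2 + z)) ℙ)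
    (hident : ∀ (m : ℤ) (x : Fin d → ℤ),
      IdentDistrib (fun ω (z : Fin d → ℤ) => π ω m x (x + z))
        (fun ω (z : Fin d → ℤ) => π ω 0 0 z) ℙ ℙ)
    (q : (Fin d → ℤ) → ℝ) (hq : ∀ z, q z = ∫ ω, π ω 0 0 z ∂ℙ)
    (θ : Fin d → ℝ) (N : ℕ) :
    ∫ ω, (qExp (π ω) θ (Real.log (phiFn q θ)) N 0 0) ^ 2 ∂ℙ
      = ∑ σ : Fin N → (unitVecs d), ∑ τ : Fin N → (unitVecs d),
          (∏ i : Fin N,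
            (q (σ i) * Real.exp (∑ l, θ l * (((σ i : Fin d → ℤ) l : ℤ) : ℝ)) / phiFn q θ)
              * (q (τ i) * Real.exp (∑ l, θ l * (((τ i : Fin d → ℤ) l : ℤ) : ℝ)) / phiFn q θ))
          * Real.exp (∑ i : Fin N,
              if (∑ j ∈ Finset.univ.filter (fun j => j < i), (σ j : Fin d → ℤ))
                  = (∑ j ∈ Finset.univ.filter (fun j => j < i), (τ j : Fin d → ℤ))
              then Real.log
                ((∫ ω, π ω 0 0 (σ i) * π ω 0 0 (τ i) ∂ℙ) / (q (σ i) * q (τ i)))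
              else 0) := by
  have hq_pos : ∀ z ∈ unitVecs d, 0 < q z := fun z hz =>
    hq z ▸ integral_stepProb_pos hident hc hell hsum1 hz
  have hnn : ∀ ω m x, ∀ z ∈ unitVecs d, 0 ≤ π ω m x (x + z) :=
    fun ω m x z hz => hc.le.trans (hell ω m x z hz)
  simp only [qExp_zero_zero]
  rw [integral_sq_sum_mul _ _ (integrable_pathWeight_mul_pathWeight hident hnn hsum1)]
  refine Finset.sum_congr rfl fun σ _ => Finset.sum_congr rfl fun τ _ => ?_
  rw [integral_pathWeight_mul_pathWeight hident hindep, exp_inner_sum_sub_mul_log_phiFn hq_pos,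
    exp_inner_sum_sub_mul_log_phiFn hq_pos, Real.exp_sum, ← Finset.prod_mul_distrib,
    ← Finset.prod_mul_distrib, ← Finset.prod_mul_distrib]
  refine Finset.prod_congr rfl fun i _ => ?_
  simp only [← hq]
  rw [ite_eq_mul_exp_ite_log
    (integral_stepProb_mul_stepProb_pos hident hc hell hsum1 (σ i).2 (τ i).2)
    (mul_pos (hq_pos _ (σ i).2) (hq_pos _ (τ i).2))]
  unfold pathPos
  ring

theorem stmt12 {d : ℕ} (c : ℝ) (hc : 0 < c)
    {Ω : Type*} [MeasureSpace Ω] [IsProbabilityMeasure (ℙ : Measure Ω)]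
    (π : Ω → ℤ → (Fin d → ℤ) → (Fin d → ℤ) → ℝ) (hmeas : Measurable π)
    (hell : ∀ ω m x, ∀ z ∈ unitVecs d, c ≤ π ω m x (x + z))
    (hpos : ∀ ω m x y, 0 ≤ π ω m x y)
    (hsum1 : ∀ ω m x, ∑ z ∈ unitVecs d, π ω m x (x + z) = 1)
    (hindep : iIndepFun (m := fun _ => inferInstance)
      (fun (p : ℤ × (Fin d → ℤ)) (ω : Ω) (z : Fin d → ℤ) => π ω p.1 p.2 (p.2 + z)) ℙ)
    (hident : ∀ (m : ℤ) (x : Fin d → ℤ),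
      IdentDistrib (fun ω (z : Fin d → ℤ) => π ω m x (x + z))
        (fun ω (z : Fin d → ℤ) => π ω 0 0 z) ℙ ℙ)
    (q : (Fin d → ℤ) → ℝ) (hq : ∀ z, q z = ∫ ω, π ω 0 0 z ∂ℙ)
    (θ : Fin d → ℝ) (N : ℕ) :
    ∫ ω, (qExp (π ω) θ (Real.log (phiFn q θ)) N 0 0) ^ 2 ∂ℙ
      = ∑ σ : Fin N → (unitVecs d), ∑ τ : Fin N → (unitVecs d),
          (∏ i : Fin N,
            (q (σ i) * Real.exp (∑ l, θ l * (((σ i : Fin d → ℤ) l : ℤ) : ℝ)) / phiFn q θ)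
              * (q (τ i) * Real.exp (∑ l, θ l * (((τ i : Fin d → ℤ) l : ℤ) : ℝ)) / phiFn q θ))
          * Real.exp (∑ i : Fin N,
              if (∑ j ∈ Finset.univ.filter (fun j => j < i), (σ j : Fin d → ℤ))
                  = (∑ j ∈ Finset.univ.filter (fun j => j < i), (τ j : Fin d → ℤ))
              then Real.log
                ((∫ ω, π ω 0 0 (σ i) * π ω 0 0 (τ i) ∂ℙ) / (q (σ i) * q (τ i)))
              else 0) :=
  stmt12_general c hc π hell hsum1 hindep hident q hq θ N
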